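/- arXiv:1612.05833 — 3 statements merged into one kernel-verified Lean document; each statement's English description precedes it below -/
import Mathlib

section
/- Suppose d ≥ 2, a : ℤ^d ↷ X is a free action, G_a is the associated graph, and F ⊆ X is a finite G_a-connected set with ∂_vis(∞) F = ∂F. Let H_{∂F} be the graph whose vertices are the unordered edges in ∂F, with two distinct edges adjacent iff some 3-cycle of G_a contains them both. Then H_{∂F} has an Euler cycle, i.e., a closed walk traversing every edge of H_{∂F} exactly once. -/
open Finset

open scoped Classical

/-- `Γ₁ = {γ ∈ ℤᵈ : ‖γ‖_∞ = 1}`. -/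
def Gamma1 (d : ℕ) : Finset (Fin d → ℤ) :=
  (Fintype.piFinset fun _ : Fin d => ({-1, 0, 1} : Finset ℤ)).erase 0

/-- Adjacency in the graph `G_a` associated to an action `a : ℤᵈ ↷ X`. -/
def ActAdj {X : Type*} (d : ℕ) (a : (Fin d → ℤ) → X → X) (x y : X) : Prop :=
  ∃ γ ∈ Gamma1 d, a γ x = y

/-- The edge boundary `∂F` of `F`, as a set of unordered edges of `G_a`. -/
def bdSym {X : Type*} (d : ℕ) (a : (Fin d → ℤ) → X → X) (F : Set X) : Set (Sym2 X) :=
  {e | ∃ x y : X, e = s(x, y) ∧ ActAdj d a x y ∧ x ∈ F ∧ y ∉ F}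

/-- The (ordered-pair) edge boundary of `F`. -/
def edgeBd {X : Type*} (d : ℕ) (a : (Fin d → ℤ) → X → X) (F : Set X) : Set (X × X) :=
  {p | ActAdj d a p.1 p.2 ∧ (p.1 ∈ F ↔ p.2 ∉ F)}

/-- A set `S` is `G_a`-connected. -/
def ConnWithin {X : Type*} (d : ℕ) (a : (Fin d → ℤ) → X → X) (S : Set X) : Prop :=
  ∀ x ∈ S, ∀ y ∈ S, Relation.ReflTransGen (fun u v => u ∈ S ∧ v ∈ S ∧ ActAdj d a u v) x y

/-- The connected component of `y` in `G_a − ∂S`. -/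
def compOutside {X : Type*} (d : ℕ) (a : (Fin d → ℤ) → X → X) (S : Set X) (y : X) :
    Set X :=
  {w | Relation.ReflTransGen
        (fun u v => ActAdj d a u v ∧ (u, v) ∉ edgeBd d a S) y w}

/-- The graph `H_{∂F}`: vertices are the unordered edges in `∂F`, and two distinct such
edges are adjacent iff some 3-cycle of `G_a` contains them both. -/
def HBoundary {X : Type*} (d : ℕ) (a : (Fin d → ℤ) → X → X) (F : Set X) :
    SimpleGraph {e : Sym2 X // e ∈ bdSym d a F} :=
  SimpleGraph.fromRel (fun e e' =>
    ∃ p q r : X, ActAdj d a p q ∧ ActAdj d a q r ∧ ActAdj d a r p ∧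
      (e.val = s(p, q) ∨ e.val = s(q, r) ∨ e.val = s(r, p)) ∧
      (e'.val = s(p, q) ∨ e'.val = s(q, r) ∨ e'.val = s(r, p)))

/-!
Write `u • x` for `a u x`. The graph `H_{∂F}` is finite, since `F` is. A vertex `s(x, y)` of
`H_{∂F}` (with `x ∈ F`, `y = γ • x ∉ F`) has one neighbour for each common neighbour `z = δ • x`
of `x` and `y`, namely whichever of `s(x, z)`, `s(z, y)` crosses `∂F`; the reflection
`δ ↦ γ - δ` pairs these off, so all degrees are even.

For connectivity, let `P` be the component of an edge `E = s(x, y)`. Pulled back along the free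
orbit map `ℤᵈ → X`, `u ↦ u • x`, membership in `P` is a `ℤ/2`-valued 1-cochain on the king's
graph of `ℤᵈ`, and it is a cocycle: a triangle contains zero or two boundary edges, and two
boundary edges of a triangle are adjacent in `H_{∂F}`. Every closed walk in `ℤᵈ` can be reduced
to the empty walk by splitting steps into unit steps, commuting unit steps across squares and
cancelling backtracks, all inside triangles; hence the cocycle is the coboundary of a 2-colouring
`f` of `ℤᵈ`, and `P` consists exactly of the boundary edges whose endpoints get different colours.
Since `F` is connected, `f` is constant on the inner endpoints of boundary edges; since every
outer endpoint lies in an infinite component of `G_a − ∂F` and the complement of a box in `ℤᵈ` is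
connected for `d ≥ 2`, `f` is constant on the outer endpoints. As `E ∈ P`, every boundary edge
lies in `P`. Euler's theorem then gives the Euler cycle.
-/

namespace SimpleGraph

variable {V : Type*} {G : SimpleGraph V}

theorem Walk.IsTrail.countP_mem_edges_eq_degree [Fintype V] [DecidableEq V] [DecidableRel G.Adj]
    {u v x : V} {p : G.Walk u v} (hp : p.IsTrail)
    (h : ∀ e ∈ G.edgeSet, x ∈ e → e ∈ p.edges) :
    p.edges.countP (x ∈ ·) = G.degree x := by
  rw [← card_incidenceFinset_eq_degree, incidenceFinset_eq_filter, ← Multiset.coe_countP,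
    Multiset.countP_eq_card_filter]
  change #(hp.edgesFinset.filter (x ∈ ·)) = _
  congr 1
  ext e
  simp only [mem_filter, mem_edgeFinset]
  exact ⟨fun ⟨he, hx⟩ => ⟨p.edges_subset_edgeSet he, hx⟩, fun ⟨he, hx⟩ => ⟨h e he hx, hx⟩⟩

theorem Walk.exists_adj_notMem_edges (hG : G.Preconnected) {u v : V} (p : G.Walk u v)
    {e : Sym2 V} (he : e ∈ G.edgeSet) (hep : e ∉ p.edges) :
    ∃ x y, x ∈ p.support ∧ G.Adj x y ∧ s(x, y) ∉ p.edges := by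
  induction e with
  | h b c =>
    by_cases hb : b ∈ p.support
    · exact ⟨b, c, hb, he, hep⟩
    obtain ⟨dt, -, hfst, hsnd⟩ :=
      (hG u b).some.exists_boundary_dart {x | x ∈ p.support} p.start_mem_support hb
    exact ⟨dt.fst, dt.snd, hfst, dt.adj, fun h => hsnd (p.snd_mem_support_of_mem_edges h)⟩

theorem exists_isEulerian_of_even_degree [Fintype V] [DecidableEq V] [DecidableRel G.Adj]
    [Nonempty V] (hG : G.Preconnected) (heven : ∀ v, Even (G.degree v)) :
    ∃ (v : V) (p : G.Walk v v), p.IsEulerian := by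
  -- a longest trail contains every edge at its end, so by parity it is closed; its rotations are
  -- longest trails too, so no edge leaves its support, and by connectivity it covers `G`
  obtain ⟨u, v, p, hp, hmax⟩ := Walk.exists_isTrail_forall_isTrail_length_le_length G
  have hend : ∀ {u' v'} (q : G.Walk u' v'), q.IsTrail → q.length = p.length →
      ∀ e ∈ G.edgeSet, v' ∈ e → e ∈ q.edges := by
    intro u' v' q hq hlen e he hv'
    obtain ⟨w, rfl⟩ := Sym2.mem_iff_exists.mp hv'
    by_contra hnot
    have hlong := hmax _ _ (Walk.cons he.symm q.reverse)
      (by simpa [Walk.isTrail_cons, hq.reverse, Sym2.eq_swap] using hnot)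
    simp only [Walk.length_cons, Walk.length_reverse] at hlong
    omega
  obtain rfl : u = v := by
    by_contra hne
    have := hp.even_countP_edges_iff v
    rw [hp.countP_mem_edges_eq_degree (hend p hp rfl)] at this
    exact (this.mp (heven v) hne).2 rfl
  refine ⟨u, p, hp.isEulerian_of_forall_mem fun e he => ?_⟩
  by_contra hep
  obtain ⟨x, y, hx, hxy, hxyp⟩ := p.exists_adj_notMem_edges hG he hep
  have := hend (p.rotate x hx) (hp.rotate hx) (by simp) s(x, y) hxy (Sym2.mem_mk_left _ _)
  exact hxyp ((p.rotate_edges x hx).mem_iff.mp this)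

end SimpleGraph

theorem Finset.even_card_of_involution {ι : Type*} {s : Finset ι} (g : ι → ι)
    (hg : ∀ i ∈ s, g i ∈ s) (hgg : ∀ i ∈ s, g (g i) = i) (hfix : ∀ i ∈ s, g i ≠ i) :
    Even #s := by
  rw [← ZMod.natCast_eq_zero_iff_even, card_eq_sum_ones, Nat.cast_sum, Nat.cast_one]
  exact sum_involution (fun i _ => g i) (fun _ _ => rfl) (fun i hi _ => hfix i hi) hg hgg

section Lattice

variable {d : ℕ}

theorem mem_Gamma1_iff {γ : Fin d → ℤ} :
    γ ∈ Gamma1 d ↔ γ ≠ 0 ∧ ∀ i, γ i = -1 ∨ γ i = 0 ∨ γ i = 1 := by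
  simp only [Gamma1, mem_erase, Fintype.mem_piFinset, mem_insert, mem_singleton]

theorem neg_mem_Gamma1 {γ : Fin d → ℤ} (h : γ ∈ Gamma1 d) : -γ ∈ Gamma1 d := by
  rw [mem_Gamma1_iff] at h ⊢
  refine ⟨neg_ne_zero.mpr h.1, fun i => ?_⟩
  rcases h.2 i with h' | h' | h' <;> simp [h']

def IsUnitStep (s : Fin d → ℤ) : Prop :=
  ∃ i ε, IsUnit ε ∧ s = Pi.single i ε

theorem IsUnitStep.mem_Gamma1 {s : Fin d → ℤ} (hs : IsUnitStep s) : s ∈ Gamma1 d := by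
  obtain ⟨i, ε, hε, rfl⟩ := hs
  refine mem_Gamma1_iff.mpr ⟨by simpa using hε.ne_zero, fun j => ?_⟩
  rcases Int.isUnit_iff.mp hε with rfl | rfl <;> by_cases hj : j = i <;> simp [hj]

theorem single_mem_Gamma1 (i : Fin d) : (Pi.single i 1 : Fin d → ℤ) ∈ Gamma1 d :=
  IsUnitStep.mem_Gamma1 ⟨i, 1, isUnit_one, rfl⟩

theorem exists_list_mem_Gamma1_sum_eq (u : Fin d → ℤ) :
    ∃ L : List (Fin d → ℤ), (∀ γ ∈ L, γ ∈ Gamma1 d) ∧ L.sum = u := by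
  have hsymm : (Gamma1 d : Set (Fin d → ℤ)) ∪ -(Gamma1 d : Set (Fin d → ℤ)) = Gamma1 d :=
    Set.union_eq_left.mpr fun γ hγ => by simpa using neg_mem_Gamma1 hγ
  apply AddSubmonoid.exists_list_of_mem_closure
  rw [← hsymm, ← AddSubgroup.closure_toAddSubmonoid, AddSubgroup.mem_toAddSubmonoid,
    pi_eq_sum_univ' u]
  refine AddSubgroup.sum_mem _ fun i _ => AddSubgroup.zsmul_mem _ (AddSubgroup.subset_closure ?_) _
  exact single_mem_Gamma1 i

theorem add_mem_Gamma1_of_isUnitStep {s t : Fin d → ℤ} (hs : IsUnitStep s) (ht : IsUnitStep t)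
    (hst : s ≠ t) (hts : t ≠ -s) : s + t ∈ Gamma1 d := by
  obtain ⟨i, ε, hε, rfl⟩ := hs
  obtain ⟨j, ε', hε', rfl⟩ := ht
  rcases Int.isUnit_iff.mp hε with rfl | rfl <;> rcases Int.isUnit_iff.mp hε' with rfl | rfl <;>
  · obtain rfl | hij := eq_or_ne i j
    · simp [Pi.single_neg] at hst hts
    refine mem_Gamma1_iff.mpr ⟨fun h => by simpa [hij] using congrFun h i, fun k => ?_⟩
    by_cases hki : k = i <;> by_cases hkj : k = j <;> simp_all

theorem neg_mem_of_sum_eq_zero {s : Fin d → ℤ} (hs : IsUnitStep s) {T : List (Fin d → ℤ)}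
    (hT : ∀ t ∈ T, IsUnitStep t) (hsum : (s :: T).sum = 0) : -s ∈ T := by
  obtain ⟨i, ε, hε, rfl⟩ := hs
  have hε2 : ε * ε = 1 := by rcases Int.isUnit_iff.mp hε with rfl | rfl <;> rfl
  have hstep : ∀ t, IsUnitStep t → t ≠ -Pi.single i ε → 0 ≤ ε * t i := by
    rintro t ⟨j, ε', hε', rfl⟩ hne
    rcases Int.isUnit_iff.mp hε with rfl | rfl <;> rcases Int.isUnit_iff.mp hε' with rfl | rfl <;>
      by_cases hij : j = i <;> simp_all [← Pi.single_neg]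
  have hmono : ∀ U : List (Fin d → ℤ), (∀ t ∈ U, IsUnitStep t ∧ t ≠ -Pi.single i ε) →
      0 ≤ ε * U.sum i := by
    intro U hU
    induction U with
    | nil => simp
    | cons t U ih =>
      have h1 := hstep t (hU t List.mem_cons_self).1 (hU t List.mem_cons_self).2
      have h2 := ih fun t ht => hU t (List.mem_cons_of_mem _ ht)
      simp only [List.sum_cons, Pi.add_apply, mul_add]
      omega
  by_contra hneg
  -- otherwise the `i`-th coordinate never decreases in the direction `ε` after the first step
  have := hmono T fun t ht => ⟨hT t ht, fun h => hneg (h ▸ ht)⟩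
  have h0 := congrArg (fun v => ε * v i) hsum
  simp only [List.sum_cons, Pi.add_apply, Pi.single_eq_same, mul_add, hε2, Pi.zero_apply,
    mul_zero] at h0
  omega

-- `δ ↦ γ - δ` is a fixed-point-free involution, since `γ` has an odd coordinate
theorem even_card_filter_sub_mem_Gamma1 {γ : Fin d → ℤ} (hγ : γ ∈ Gamma1 d) :
    Even #{δ ∈ Gamma1 d | δ - γ ∈ Gamma1 d} := by
  refine Finset.even_card_of_involution (γ - ·) (fun δ hδ => ?_) (fun δ _ => sub_sub_cancel γ δ)
    (fun δ _ h => ?_)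
  · rw [mem_filter] at hδ ⊢
    exact ⟨by simpa using neg_mem_Gamma1 hδ.2, by simpa using neg_mem_Gamma1 hδ.1⟩
  · obtain ⟨hγ0, hγc⟩ := mem_Gamma1_iff.mp hγ
    obtain ⟨i, hi⟩ := Function.ne_iff.mp hγ0
    have := congrFun h i
    simp only [Pi.sub_apply] at this
    have := hγc i
    simp only [Pi.zero_apply] at hi
    omega

end Lattice

section Cocycle

variable {d : ℕ} {A : Type*} [AddCommGroup A] (b : (Fin d → ℤ) → (Fin d → ℤ) → A)

/-- `b` summed along the walk in `ℤᵈ` that starts at `x` and makes the successive steps `L`. -/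
def walkSum : (Fin d → ℤ) → List (Fin d → ℤ) → A
  | _, [] => 0
  | x, γ :: L => b x (x + γ) + walkSum (x + γ) L

@[simp] theorem walkSum_nil (x : Fin d → ℤ) : walkSum b x [] = 0 := rfl

@[simp] theorem walkSum_cons (x γ : Fin d → ℤ) (L : List (Fin d → ℤ)) :
    walkSum b x (γ :: L) = b x (x + γ) + walkSum b (x + γ) L := rfl

theorem walkSum_append (x : Fin d → ℤ) (L L' : List (Fin d → ℤ)) :
    walkSum b x (L ++ L') = walkSum b x L + walkSum b (x + L.sum) L' := by
  induction L generalizing x with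
  | nil => simp
  | cons γ L ih => simp [ih, add_assoc]

variable (hanti : ∀ u v, b v u = -b u v)
  (hcocycle : ∀ u γ δ, γ ∈ Gamma1 d → δ ∈ Gamma1 d → γ + δ ∈ Gamma1 d →
    b u (u + γ) + b (u + γ) (u + γ + δ) = b u (u + γ + δ))

include hanti in
theorem walkSum_map_neg_reverse (x : Fin d → ℤ) (L : List (Fin d → ℤ)) :
    walkSum b (x + L.sum) (L.map (-·)).reverse = -walkSum b x L := by
  induction L generalizing x with
  | nil => simp
  | cons γ L ih =>
    rw [List.sum_cons, ← add_assoc, List.map_cons, List.reverse_cons, walkSum_append, ih,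
      ← List.sum_neg_reverse, add_neg_cancel_right, walkSum_cons, walkSum_nil, add_zero,
      add_neg_cancel_right, hanti, walkSum_cons, neg_add, add_comm]

include hanti in
theorem walkSum_cons_neg (x s : Fin d → ℤ) (R : List (Fin d → ℤ)) :
    walkSum b x (s :: -s :: R) = walkSum b x R := by
  simp [hanti (x + s) x, ← add_assoc]

include hcocycle in
theorem exists_isUnitStep_walkSum_eq {γ : Fin d → ℤ} (hγ : γ ∈ Gamma1 d) :
    ∃ E : List (Fin d → ℤ), (∀ t ∈ E, IsUnitStep t) ∧ E.sum = γ ∧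
      ∀ x, walkSum b x E = b x (x + γ) := by
  suffices ∀ s : Finset (Fin d), ∀ γ ∈ Gamma1 d, (∀ i ∉ s, γ i = 0) →
      ∃ E : List (Fin d → ℤ), (∀ t ∈ E, IsUnitStep t) ∧ E.sum = γ ∧
        ∀ x, walkSum b x E = b x (x + γ) from this univ γ hγ (by simp)
  intro s
  induction s using Finset.induction_on with
  | empty =>
    intro γ hγ h0
    exact absurd (funext fun i => h0 i (notMem_empty i)) (mem_Gamma1_iff.mp hγ).1
  | insert i s hi ih =>
    intro γ hγ hsupp
    by_cases hγi : γ i = 0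
    · refine ih γ hγ fun j hj => ?_
      by_cases hji : j = i
      · rwa [hji]
      · exact hsupp j (by simp [hji, hj])
    have hunit : IsUnitStep (Pi.single i (γ i)) := by
      refine ⟨i, γ i, Int.isUnit_iff.mpr ?_, rfl⟩
      have := (mem_Gamma1_iff.mp hγ).2 i
      omega
    set γ' := γ - Pi.single i (γ i) with hγ'
    have hsupp' : ∀ j ∉ s, γ' j = 0 := by
      intro j hj
      by_cases hji : j = i
      · simp [hγ', hji]
      · simp [hγ', hji, hsupp j (by simp [hji, hj])]
    by_cases h0 : γ' = 0
    · have hγeq : γ = Pi.single i (γ i) := sub_eq_zero.mp h0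
      exact ⟨[γ], by simpa [← hγeq] using hunit, by simp, by simp⟩
    have hγ'Γ : γ' ∈ Gamma1 d := by
      refine mem_Gamma1_iff.mpr ⟨h0, fun j => ?_⟩
      by_cases hji : j = i
      · simp [hγ', hji]
      · simpa [hγ', hji] using (mem_Gamma1_iff.mp hγ).2 j
    obtain ⟨E, hE, hEsum, hEwalk⟩ := ih γ' hγ'Γ hsupp'
    refine ⟨Pi.single i (γ i) :: E, ?_, by simp [hEsum, hγ'], fun x => ?_⟩
    · simpa using ⟨hunit, hE⟩
    · have := hcocycle x _ γ' hunit.mem_Gamma1 hγ'Γ (by simpa [hγ'] using hγ)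
      simp only [add_sub_cancel, hγ', add_assoc] at this
      simp [hEwalk, ← this, hγ', add_assoc]

include hcocycle in
theorem exists_isUnitStep_walkSum_eq_walkSum {L : List (Fin d → ℤ)}
    (hL : ∀ γ ∈ L, γ ∈ Gamma1 d) :
    ∃ E : List (Fin d → ℤ), (∀ t ∈ E, IsUnitStep t) ∧ E.sum = L.sum ∧
      ∀ x, walkSum b x E = walkSum b x L := by
  induction L with
  | nil => exact ⟨[], by simp, rfl, fun _ => rfl⟩
  | cons γ L ih =>
    obtain ⟨E₁, hE₁, hsum₁, hwalk₁⟩ :=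
      exists_isUnitStep_walkSum_eq b hcocycle (hL γ List.mem_cons_self)
    obtain ⟨E₂, hE₂, hsum₂, hwalk₂⟩ := ih fun γ' h => hL γ' (List.mem_cons_of_mem _ h)
    refine ⟨E₁ ++ E₂, fun t ht => ?_, by simp [hsum₁, hsum₂], fun x => ?_⟩
    · rcases List.mem_append.mp ht with h | h
      exacts [hE₁ t h, hE₂ t h]
    · rw [walkSum_append, hwalk₁, hsum₁, hwalk₂, walkSum_cons]

-- two commuting unit steps span a unit square, which the diagonal `s + t` cuts into two triangles
include hcocycle in
theorem walkSum_swap {s t : Fin d → ℤ} (hs : IsUnitStep s) (ht : IsUnitStep t) (hts : t ≠ -s)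
    (x : Fin d → ℤ) (R : List (Fin d → ℤ)) :
    walkSum b x (s :: t :: R) = walkSum b x (t :: s :: R) := by
  obtain rfl | hst := eq_or_ne s t
  · rfl
  have hsΓ := hs.mem_Gamma1
  have htΓ := ht.mem_Gamma1
  have hΓ := add_mem_Gamma1_of_isUnitStep hs ht hst hts
  have h₁ := hcocycle x s t hsΓ htΓ hΓ
  have h₂ := hcocycle x t s htΓ hsΓ (by rwa [add_comm])
  rw [add_right_comm] at h₂
  simp only [walkSum_cons, ← add_assoc, h₁, h₂, add_right_comm x t s]

include hanti hcocycle

theorem exists_walkSum_eq_of_neg_mem {s : Fin d → ℤ}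
    (hs : IsUnitStep s) {T : List (Fin d → ℤ)} (hT : ∀ t ∈ T, IsUnitStep t) (hsT : -s ∈ T) :
    ∃ T' : List (Fin d → ℤ), T'.length < T.length ∧ (∀ t ∈ T', IsUnitStep t) ∧
      T'.sum = (s :: T).sum ∧ ∀ x, walkSum b x (s :: T) = walkSum b x T' := by
  induction T with
  | nil => simp at hsT
  | cons t R ih =>
    have hR : ∀ t ∈ R, IsUnitStep t := fun t' h => hT t' (List.mem_cons_of_mem _ h)
    obtain rfl | hts := eq_or_ne t (-s)
    · exact ⟨R, by simp, hR, by simp, fun x => walkSum_cons_neg b hanti x s R⟩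
    have ht := hT t List.mem_cons_self
    obtain ⟨R', hlen, hR', hsum, hwalk⟩ :=
      ih hR ((List.mem_cons.mp hsT).resolve_left fun h => hts h.symm)
    refine ⟨t :: R', by simpa using hlen, ?_, ?_, fun x => ?_⟩
    · simpa using ⟨ht, hR'⟩
    · simp only [List.sum_cons] at hsum ⊢
      rw [hsum, add_left_comm]
    · rw [walkSum_swap b hcocycle hs ht hts, walkSum_cons, hwalk, walkSum_cons]

theorem walkSum_eq_zero_of_isUnitStep {E : List (Fin d → ℤ)}
    (hE : ∀ t ∈ E, IsUnitStep t) (hsum : E.sum = 0) (x : Fin d → ℤ) : walkSum b x E = 0 := by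
  induction hlen : E.length using Nat.strong_induction_on generalizing E with
  | _ n ih =>
  match E, hE, hsum, hlen with
  | [], _, _, _ => rfl
  | s :: T, hE, hsum, hlen =>
    have hs := hE s List.mem_cons_self
    have hT : ∀ t ∈ T, IsUnitStep t := fun t h => hE t (List.mem_cons_of_mem _ h)
    obtain ⟨T', hlen', hT', hsum', hwalk⟩ :=
      exists_walkSum_eq_of_neg_mem b hanti hcocycle hs hT (neg_mem_of_sum_eq_zero hs hT hsum)
    rw [hwalk]
    exact ih T'.length (by rw [← hlen, List.length_cons]; omega) hT' (hsum'.trans hsum) rfl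

theorem walkSum_eq_zero_of_sum_eq_zero {L : List (Fin d → ℤ)}
    (hL : ∀ γ ∈ L, γ ∈ Gamma1 d) (hsum : L.sum = 0) (x : Fin d → ℤ) : walkSum b x L = 0 := by
  obtain ⟨E, hE, hEsum, hwalk⟩ := exists_isUnitStep_walkSum_eq_walkSum b hcocycle hL
  rw [← hwalk, walkSum_eq_zero_of_isUnitStep b hanti hcocycle hE (hEsum.trans hsum)]

theorem exists_potential_of_cocycle :
    ∃ f : (Fin d → ℤ) → A, ∀ u γ, γ ∈ Gamma1 d → b u (u + γ) = f (u + γ) - f u := by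
  choose path hpath hpathsum using exists_list_mem_Gamma1_sum_eq (d := d)
  refine ⟨fun u => walkSum b 0 (path u), fun u γ hγ => ?_⟩
  -- go out to `u` along `path u`, step to `u + γ`, and come back along `path (u + γ)` reversed
  have hloop := walkSum_eq_zero_of_sum_eq_zero b hanti hcocycle
    (L := path u ++ γ :: ((path (u + γ)).map (-·)).reverse) ?_ ?_ 0
  · have hback := walkSum_map_neg_reverse b hanti 0 (path (u + γ))
    rw [zero_add, hpathsum] at hback
    rw [walkSum_append, walkSum_cons, zero_add, hpathsum, hback] at hloop
    rw [← sub_eq_zero, ← hloop]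
    abel
  · intro δ hδ
    simp only [List.mem_append, List.mem_cons, List.mem_map, List.mem_reverse] at hδ
    rcases hδ with h | rfl | ⟨δ', h, rfl⟩
    exacts [hpath u δ h, hγ, neg_mem_Gamma1 (hpath _ δ' h)]
  · rw [List.sum_append, List.sum_cons, ← List.sum_neg_reverse, hpathsum, hpathsum]
    abel

end Cocycle

section Infinity

variable {d : ℕ} {α : Type*} {T : Set (Fin d → ℤ)} {R : ℤ}

theorem exists_abs_le_of_finite (hT : T.Finite) : ∃ R : ℤ, ∀ u ∈ T, ∀ i, |u i| ≤ R :=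
  ⟨∑ u ∈ hT.toFinset, ∑ i, |u i|, fun u hu i =>
    (single_le_sum (fun j _ => abs_nonneg (u j)) (mem_univ i)).trans
      (single_le_sum (f := fun v => ∑ j, |v j|) (fun _ _ => sum_nonneg fun _ _ => abs_nonneg _)
        (hT.mem_toFinset.mpr hu))⟩

theorem Set.Infinite.exists_lt_abs {S : Set (Fin d → ℤ)} (hS : S.Infinite) (R : ℤ) :
    ∃ u ∈ S, ∃ i, R < |u i| := by
  by_contra! h
  refine hS ((Set.finite_Icc (fun _ => -R) (fun _ => R)).subset fun u hu => ?_)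
  exact ⟨fun i => neg_le_of_abs_le (h u hu i), fun i => le_of_abs_le (h u hu i)⟩

variable (hT : ∀ u ∈ T, ∀ i, |u i| ≤ R) {φ : (Fin d → ℤ) → α}
  (hφ : ∀ u i, u ∉ T → u + Pi.single i 1 ∉ T → φ (u + Pi.single i 1) = φ u)
include hT hφ

theorem eq_update_of_lt_abs {w : Fin d → ℤ} {j k : Fin d} (hjk : j ≠ k) (hw : R < |w j|)
    (n : ℤ) : φ (Function.update w k n) = φ w := by
  have hout : ∀ m, Function.update w k m ∉ T := fun m hm => by
    have := hT _ hm j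
    rw [Function.update_of_ne hjk] at this
    omega
  have hper : Function.Periodic (fun m => φ (Function.update w k m)) 1 := fun m => by
    have hstep : Function.update w k m + Pi.single k 1 = Function.update w k (m + 1) := by
      ext l
      by_cases hl : l = k <;> simp [hl]
    simp only [← hstep]
    exact hφ _ k (hout m) (hstep ▸ hout (m + 1))
  have := (hper.int_mul_eq n).trans (hper.int_mul_eq (w k)).symm
  simpa using this

-- outside the box `[-R, R]ᵈ` one can walk from any point to the corner `(R + 1, …, R + 1)`,
-- keeping some coordinate at absolute value `> R` at all times; this needs a second coordinate
theorem eq_of_lt_abs (hd : 2 ≤ d) {u : Fin d → ℤ} {i : Fin d} (hu : R < |u i|) :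
    φ u = φ (fun _ => R + 1) := by
  obtain ⟨j, hji⟩ : ∃ j, j ≠ i := by
    by_cases hi : i = ⟨0, by omega⟩
    · exact ⟨⟨1, by omega⟩, by simp [hi, Fin.ext_iff]⟩
    · exact ⟨⟨0, by omega⟩, Ne.symm hi⟩
  suffices h : ∀ s : Finset (Fin d), ∀ w : Fin d → ℤ, w j = R + 1 → (∀ k ∉ s, w k = R + 1) →
      φ w = φ (fun _ => R + 1) by
    rw [← eq_update_of_lt_abs hT hφ (Ne.symm hji) hu (R + 1)]
    exact h univ _ (by simp) (by simp)
  intro s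
  induction s using Finset.induction_on with
  | empty => exact fun w _ hw => congrArg φ (funext fun k => hw k (notMem_empty k))
  | insert k s hk ih =>
    intro w hwj hw
    have hwj' : R < |w j| := hwj ▸ (lt_add_one R).trans_le (le_abs_self _)
    obtain rfl | hkj := eq_or_ne k j
    · exact ih w hwj fun l hl => by
        by_cases hlk : l = k
        · rwa [hlk]
        · exact hw l (by simp [hlk, hl])
    rw [← eq_update_of_lt_abs hT hφ hkj.symm hwj' (R + 1)]
    refine ih _ (by rwa [Function.update_of_ne hkj.symm]) fun l hl => ?_
    by_cases hlk : l = k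
    · simp [hlk]
    · rw [Function.update_of_ne hlk]
      exact hw l (by simp [hlk, hl])

end Infinity

section FreeAction

variable {X : Type*} {d : ℕ} {a : (Fin d → ℤ) → X → X} {α : Type*}
  (ha0 : ∀ x : X, a 0 x = x)
  (haadd : ∀ (g g' : Fin d → ℤ) (x : X), a (g + g') x = a g (a g' x))
  (hfree : ∀ (g : Fin d → ℤ) (x : X), a g x = x → g = 0)

include haadd hfree in
theorem act_left_injective (x : X) : Function.Injective fun γ => a γ x := by
  intro γ δ h
  refine sub_eq_zero.mp (hfree _ (a δ x) ?_)
  simp only at h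
  rw [← haadd, sub_add_cancel, h]

include ha0 haadd in
theorem ActAdj.symm {x y : X} (h : ActAdj d a x y) : ActAdj d a y x := by
  obtain ⟨γ, hγ, rfl⟩ := h
  exact ⟨-γ, neg_mem_Gamma1 hγ, by rw [← haadd, neg_add_cancel, ha0]⟩

include hfree in
theorem ActAdj.ne {x y : X} (h : ActAdj d a x y) : x ≠ y := by
  rintro rfl
  obtain ⟨γ, hγ, hγx⟩ := h
  exact (mem_Gamma1_iff.mp hγ).1 (hfree γ x hγx)

include haadd hfree in
theorem actAdj_act_act_iff {x : X} {u v : Fin d → ℤ} :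
    ActAdj d a (a u x) (a v x) ↔ v - u ∈ Gamma1 d := by
  refine ⟨fun ⟨γ, hγ, h⟩ => ?_, fun h => ⟨v - u, h, by rw [← haadd, sub_add_cancel]⟩⟩
  rwa [← act_left_injective haadd hfree x ((haadd γ u x).trans h), add_sub_cancel_right]

include haadd in
theorem actAdj_act_add {x : X} (u : Fin d → ℤ) {γ : Fin d → ℤ} (hγ : γ ∈ Gamma1 d) :
    ActAdj d a (a u x) (a (u + γ) x) :=
  ⟨γ, hγ, by rw [add_comm, haadd]⟩

include ha0 haadd in
theorem mk_mem_bdSym_iff {F : Set X} {p q : X} :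
    s(p, q) ∈ bdSym d a F ↔ (p, q) ∈ edgeBd d a F := by
  constructor
  · rintro ⟨x, y, hxy, hadj, hx, hy⟩
    rcases Sym2.eq_iff.mp hxy with ⟨rfl, rfl⟩ | ⟨rfl, rfl⟩
    · exact ⟨hadj, iff_of_true hx hy⟩
    · exact ⟨hadj.symm ha0 haadd, iff_of_false hy (not_not.mpr hx)⟩
  · rintro ⟨hadj, hpq⟩
    by_cases hp : p ∈ F
    · exact ⟨p, q, rfl, hadj, hp, hpq.mp hp⟩
    · exact ⟨q, p, Sym2.eq_swap, hadj.symm ha0 haadd, not_not.mp (mt hpq.mpr hp), hp⟩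

include ha0 haadd in
theorem hBoundary_adj_iff {F : Set X} {v w : {e : Sym2 X // e ∈ bdSym d a F}} :
    (HBoundary d a F).Adj v w ↔ v ≠ w ∧ ∃ c p q, v.val = s(c, p) ∧ w.val = s(c, q) ∧
      ActAdj d a c p ∧ ActAdj d a c q ∧ ActAdj d a p q := by
  have key : ∀ e e' : Sym2 X, e ≠ e' → (∃ p q r, ActAdj d a p q ∧ ActAdj d a q r ∧
      ActAdj d a r p ∧ (e = s(p, q) ∨ e = s(q, r) ∨ e = s(r, p)) ∧
      (e' = s(p, q) ∨ e' = s(q, r) ∨ e' = s(r, p))) → ∃ c p q, e = s(c, p) ∧ e' = s(c, q) ∧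
        ActAdj d a c p ∧ ActAdj d a c q ∧ ActAdj d a p q := by
    rintro e e' hne ⟨p, q, r, hpq, hqr, hrp, he | he | he, he' | he' | he'⟩ <;> subst he he' <;>
      first
      | exact absurd rfl hne
      | exact ⟨p, q, r, rfl, Sym2.eq_swap, hpq, hrp.symm ha0 haadd, hqr⟩
      | exact ⟨q, p, r, Sym2.eq_swap, rfl, hpq.symm ha0 haadd, hqr, hrp.symm ha0 haadd⟩
      | exact ⟨q, r, p, rfl, Sym2.eq_swap, hqr, hpq.symm ha0 haadd, hrp⟩
      | exact ⟨r, q, p, Sym2.eq_swap, rfl, hqr.symm ha0 haadd, hrp, hpq.symm ha0 haadd⟩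
      | exact ⟨p, r, q, Sym2.eq_swap, rfl, hrp.symm ha0 haadd, hpq, hqr.symm ha0 haadd⟩
      | exact ⟨r, p, q, rfl, Sym2.eq_swap, hrp, hqr.symm ha0 haadd, hpq⟩
  rw [HBoundary, SimpleGraph.fromRel_adj]
  constructor
  · rintro ⟨hne, h | h⟩
    · exact ⟨hne, key _ _ (Subtype.coe_ne_coe.mpr hne) h⟩
    · obtain ⟨c, p, q, hw, hv, hcp, hcq, hpq⟩ := key _ _ (Subtype.coe_ne_coe.mpr hne.symm) h
      exact ⟨hne, c, q, p, hv, hw, hcq, hcp, hpq.symm ha0 haadd⟩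
  · rintro ⟨hne, c, p, q, hv, hw, hcp, hcq, hpq⟩
    exact ⟨hne, Or.inl ⟨c, p, q, hcp, hpq, hcq.symm ha0 haadd, Or.inl hv,
      Or.inr (Or.inr (hw.trans Sym2.eq_swap))⟩⟩

-- a triangle has no or two boundary edges, and two boundary edges of a triangle are adjacent in
-- `H_{∂F}`, so they lie in the same components of `H_{∂F}`
include ha0 haadd hfree in
theorem indicator_add_indicator_of_triangle {F : Set X} {P : Set (Sym2 X)}
    (hP : P ⊆ bdSym d a F)
    (hPadj : ∀ v w, (HBoundary d a F).Adj v w → (v.val ∈ P ↔ w.val ∈ P)) {p q r : X}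
    (hpq : ActAdj d a p q) (hqr : ActAdj d a q r) (hpr : ActAdj d a p r) :
    P.indicator 1 s(p, q) + P.indicator 1 s(q, r) = (P.indicator 1 s(p, r) : ZMod 2) := by
  have hbd : ∀ {u v}, ActAdj d a u v → (s(u, v) ∈ bdSym d a F ↔ (u ∈ F ↔ v ∉ F)) :=
    fun h => (mk_mem_bdSym_iff ha0 haadd).trans (and_iff_right h)
  have hcommon : ∀ {c u v} (hcu : ActAdj d a c u) (hcv : ActAdj d a c v) (huv : ActAdj d a u v),
      s(c, u) ∈ bdSym d a F → s(c, v) ∈ bdSym d a F → (s(c, u) ∈ P ↔ s(c, v) ∈ P) := by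
    intro c u v hcu hcv huv hu hv
    refine hPadj ⟨_, hu⟩ ⟨_, hv⟩
      ((hBoundary_adj_iff ha0 haadd).mpr ⟨fun h => ?_, c, u, v, rfl, rfl, hcu, hcv, huv⟩)
    rcases Sym2.eq_iff.mp (congrArg Subtype.val h) with ⟨-, h'⟩ | ⟨-, h'⟩
    exacts [huv.ne hfree h', hcu.ne hfree h'.symm]
  have h₁ := hcommon hpq hpr hqr
  have h₂ := hcommon (hpq.symm ha0 haadd) hqr hpr
  have h₃ := hcommon (hpr.symm ha0 haadd) (hqr.symm ha0 haadd) hpq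
  rw [Sym2.eq_swap (a := q) (b := p)] at h₂
  rw [Sym2.eq_swap (a := r) (b := p), Sym2.eq_swap (a := r) (b := q)] at h₃
  have hpq_bd := hbd hpq
  have hqr_bd := hbd hqr
  have hpr_bd := hbd hpr
  have hpq_P := @hP s(p, q)
  have hqr_P := @hP s(q, r)
  have hpr_P := @hP s(p, r)
  simp only [Set.indicator_apply, Pi.one_apply]
  split_ifs <;> grind

-- exactly one of the edges `s(x, z)`, `s(z, y)` of the triangle on `s(x, y)` crosses `∂F`
include ha0 haadd hfree in
theorem exists_hBoundary_adj_iff {F : Set X} {v : {e : Sym2 X // e ∈ bdSym d a F}} {x y : X}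
    (hv : v.val = s(x, y)) (hxy : ActAdj d a x y) (hx : x ∈ F) (hy : y ∉ F) {e : Sym2 X} :
    (∃ h : e ∈ bdSym d a F, (HBoundary d a F).Adj v ⟨e, h⟩) ↔
      ∃ z, ActAdj d a x z ∧ ActAdj d a y z ∧ e = if z ∈ F then s(z, y) else s(x, z) := by
  constructor
  · rintro ⟨he, hadj⟩
    obtain ⟨-, c, p, q, hcp, rfl, hc, hcq, hpq⟩ := (hBoundary_adj_iff ha0 haadd).mp hadj
    have hqF := (mk_mem_bdSym_iff ha0 haadd).mp he |>.2
    rcases Sym2.eq_iff.mp (hv.symm.trans hcp) with ⟨rfl, rfl⟩ | ⟨rfl, rfl⟩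
    · exact ⟨q, hcq, hpq, by rw [if_neg (hqF.mp hx)]⟩
    · exact ⟨q, hpq, hcq, by rw [if_pos (not_not.mp (mt hqF.mpr hy)), Sym2.eq_swap]⟩
  · rintro ⟨z, hxz, hyz, rfl⟩
    have hzv : z ∉ v.val := by
      rw [hv, Sym2.mem_iff]
      rintro (rfl | rfl)
      exacts [hxz.ne hfree rfl, hyz.ne hfree rfl]
    split_ifs with hz
    · have he : s(z, y) ∈ bdSym d a F :=
        (mk_mem_bdSym_iff ha0 haadd).mpr ⟨hyz.symm ha0 haadd, iff_of_true hz hy⟩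
      refine ⟨he, (hBoundary_adj_iff ha0 haadd).mpr ⟨?_, y, x, z, hv.trans Sym2.eq_swap,
        Sym2.eq_swap, hxy.symm ha0 haadd, hyz, hxz⟩⟩
      rintro rfl
      exact hzv (Sym2.mem_mk_left z y)
    · have he : s(x, z) ∈ bdSym d a F :=
        (mk_mem_bdSym_iff ha0 haadd).mpr ⟨hxz, iff_of_true hx hz⟩
      refine ⟨he, (hBoundary_adj_iff ha0 haadd).mpr ⟨?_, x, y, z, hv, rfl, hxy, hxz, hyz⟩⟩
      rintro rfl
      exact hzv (Sym2.mem_mk_right x z)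

include ha0 haadd hfree in
theorem even_degree_hBoundary {F : Set X} [Fintype {e : Sym2 X // e ∈ bdSym d a F}]
    [DecidableRel (HBoundary d a F).Adj] (v : {e : Sym2 X // e ∈ bdSym d a F}) :
    Even ((HBoundary d a F).degree v) := by
  obtain ⟨x, y, hv, hxy, hx, hy⟩ := v.2
  obtain ⟨γ, hγ, rfl⟩ := id hxy
  set third : (Fin d → ℤ) → Sym2 X :=
    fun δ => if a δ x ∈ F then s(a δ x, a γ x) else s(x, a δ x) with hthird
  have hnbr : ((HBoundary d a F).neighborFinset v).map (Function.Embedding.subtype _) =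
      {δ ∈ Gamma1 d | δ - γ ∈ Gamma1 d}.image third := by
    ext e
    simp only [mem_map, SimpleGraph.mem_neighborFinset, Function.Embedding.coe_subtype,
      mem_image, mem_filter]
    rw [show (∃ w, (HBoundary d a F).Adj v w ∧ w.val = e) ↔
        ∃ h : e ∈ bdSym d a F, (HBoundary d a F).Adj v ⟨e, h⟩ from
        ⟨fun ⟨w, h, hw⟩ => hw ▸ ⟨w.2, h⟩, fun ⟨_, h⟩ => ⟨_, h, rfl⟩⟩,
      exists_hBoundary_adj_iff ha0 haadd hfree hv hxy hx hy]
    constructor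
    · rintro ⟨_, ⟨δ, hδ, rfl⟩, hγδ, rfl⟩
      exact ⟨δ, ⟨hδ, (actAdj_act_act_iff haadd hfree).mp hγδ⟩, rfl⟩
    · rintro ⟨δ, ⟨hδ, hγδ⟩, rfl⟩
      refine ⟨a δ x, ⟨δ, hδ, rfl⟩, (actAdj_act_act_iff haadd hfree).mpr hγδ, rfl⟩
  rw [← SimpleGraph.card_neighborFinset_eq_degree, ← card_map, hnbr, card_image_of_injOn]
  · exact even_card_filter_sub_mem_Gamma1 hγ
  · have hmem : ∀ δ, a δ x ∈ third δ := fun δ => by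
      simp only [hthird]
      split_ifs <;> simp
    have hsub : ∀ δ, ∀ z ∈ third δ, z = a δ x ∨ z = x ∨ z = a γ x := fun δ z => by
      simp only [hthird]
      split_ifs <;> simp only [Sym2.mem_iff] <;> tauto
    intro δ hδ δ' _ h
    rw [mem_coe, mem_filter] at hδ
    rcases hsub δ' _ (h ▸ hmem δ) with h' | h' | h'
    · exact act_left_injective haadd hfree x h'
    · exact absurd (act_left_injective haadd hfree x (h'.trans (ha0 x).symm))
        (mem_Gamma1_iff.mp hδ.1).1
    · exact absurd (sub_eq_zero.mpr (act_left_injective haadd hfree x h'))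
        (mem_Gamma1_iff.mp hδ.2).1

include haadd in
theorem exists_act_eq_of_reflTransGen {x : X} {r : X → X → Prop}
    (hr : ∀ p q, r p q → ActAdj d a p q) {φ : (Fin d → ℤ) → α}
    (hφ : ∀ v γ, γ ∈ Gamma1 d → r (a v x) (a (v + γ) x) → φ (v + γ) = φ v)
    {u : Fin d → ℤ} {q : X} (h : Relation.ReflTransGen r (a u x) q) :
    ∃ v, a v x = q ∧ φ v = φ u := by
  induction h with
  | refl => exact ⟨u, rfl, rfl⟩
  | tail _ hpq ih =>
    obtain ⟨v, rfl, hv⟩ := ih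
    obtain ⟨γ, hγ, rfl⟩ := hr _ _ hpq
    rw [← haadd, add_comm] at hpq ⊢
    exact ⟨v + γ, rfl, (hφ v γ hγ hpq).trans hv⟩

include haadd in
theorem eq_of_infinite_compOutside (hd : 2 ≤ d) {F : Set X} {x : X} {R : ℤ}
    (hR : ∀ v, a v x ∈ F → ∀ i, |v i| ≤ R) {φ : (Fin d → ℤ) → α}
    (hφ : ∀ v γ, γ ∈ Gamma1 d → (a v x, a (v + γ) x) ∉ edgeBd d a F → φ (v + γ) = φ v)
    {u : Fin d → ℤ} (hinf : (compOutside d a F (a u x)).Infinite) :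
    φ u = φ fun _ => R + 1 := by
  have hcover : compOutside d a F (a u x) ⊆
      (fun v => a v x) '' {v | a v x ∈ compOutside d a F (a u x) ∧ φ v = φ u} := fun w hw => by
    obtain ⟨v, rfl, hv⟩ := exists_act_eq_of_reflTransGen haadd (fun _ _ h => h.1)
      (fun v γ hγ h => hφ v γ hγ h.2) hw
    exact ⟨v, ⟨hw, hv⟩, rfl⟩
  obtain ⟨v, ⟨-, hv⟩, i, hvi⟩ := ((hinf.mono hcover).of_image _).exists_lt_abs R
  refine hv.symm.trans (eq_of_lt_abs hR (fun w j hw hw' => hφ w _ (single_mem_Gamma1 j) ?_) hd hvi)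
  exact fun h => hw (h.2.mpr hw')

-- inner endpoints are joined through `F`, outer endpoints through infinity
include ha0 haadd hfree in
theorem exists_act_eq_and_eq_of_boundary_edges (hd : 2 ≤ d) {F : Set X} (hFfin : F.Finite)
    (hFconn : ConnWithin d a F)
    (hvis : ∀ x y : X, ActAdj d a x y → x ∈ F → y ∉ F → (compOutside d a F y).Infinite)
    {x : X} {φ : (Fin d → ℤ) → α}
    (hφ : ∀ v γ, γ ∈ Gamma1 d → (a v x, a (v + γ) x) ∉ edgeBd d a F → φ (v + γ) = φ v)
    {γ γ' : Fin d → ℤ} {x' : X} (hγ : γ ∈ Gamma1 d) (hx : x ∈ F) (hy : a γ x ∉ F)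
    (hγ' : γ' ∈ Gamma1 d) (hx' : x' ∈ F) (hy' : a γ' x' ∉ F) :
    ∃ u, a u x = x' ∧ φ u = φ 0 ∧ φ (u + γ') = φ γ := by
  obtain ⟨u, rfl, hu⟩ := exists_act_eq_of_reflTransGen haadd
    (r := fun p q => p ∈ F ∧ q ∈ F ∧ ActAdj d a p q) (fun _ _ h => h.2.2)
    (fun v δ hδ h => hφ v δ hδ fun hbd => hbd.2.mp h.1 h.2.1) (u := 0)
    ((ha0 x).symm ▸ hFconn x hx _ hx')
  obtain ⟨R, hR⟩ :=
    exists_abs_le_of_finite (hFfin.preimage (act_left_injective haadd hfree x).injOn)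
  have hout := eq_of_infinite_compOutside haadd hd hR hφ (hvis _ _ ⟨γ, hγ, rfl⟩ hx hy)
  have hout' := eq_of_infinite_compOutside haadd hd hR hφ (u := u + γ')
    (by rw [add_comm, haadd]; exact hvis _ _ ⟨γ', hγ', rfl⟩ hx' hy')
  exact ⟨u, rfl, hu, hout'.trans hout.symm⟩

include ha0 haadd hfree in
theorem hBoundary_preconnected (hd : 2 ≤ d) {F : Set X} (hFfin : F.Finite)
    (hFconn : ConnWithin d a F)
    (hvis : ∀ x y : X, ActAdj d a x y → x ∈ F → y ∉ F → (compOutside d a F y).Infinite) :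
    (HBoundary d a F).Preconnected := by
  intro E E'
  obtain ⟨x, y, hE, ⟨γ, hγ, rfl⟩, hx, hy⟩ := E.2
  obtain ⟨x', y', hE', ⟨γ', hγ', rfl⟩, hx', hy'⟩ := E'.2
  set P : Set (Sym2 X) := {e | ∃ h : e ∈ bdSym d a F, (HBoundary d a F).Reachable E ⟨e, h⟩}
  have hP : P ⊆ bdSym d a F := fun e ⟨h, _⟩ => h
  have hPadj : ∀ v w, (HBoundary d a F).Adj v w → (v.val ∈ P ↔ w.val ∈ P) := fun v w h =>
    ⟨fun ⟨_, hr⟩ => ⟨w.2, hr.trans h.reachable⟩, fun ⟨_, hr⟩ => ⟨v.2, hr.trans h.symm.reachable⟩⟩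
  let b : (Fin d → ℤ) → (Fin d → ℤ) → ZMod 2 := fun u v => P.indicator 1 s(a u x, a v x)
  have hanti : ∀ u v, b v u = -b u v := fun u v => by
    simp only [b, Sym2.eq_swap (a := a v x), ZMod.neg_eq_self_mod_two]
  have hcocycle : ∀ u γ δ, γ ∈ Gamma1 d → δ ∈ Gamma1 d → γ + δ ∈ Gamma1 d →
      b u (u + γ) + b (u + γ) (u + γ + δ) = b u (u + γ + δ) := fun u γ δ hγ hδ hγδ =>
    indicator_add_indicator_of_triangle ha0 haadd hfree hP hPadj (actAdj_act_add haadd u hγ)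
      (actAdj_act_add haadd (u + γ) hδ) (add_assoc u γ δ ▸ actAdj_act_add haadd u hγδ)
  obtain ⟨f, hf⟩ := exists_potential_of_cocycle b hanti hcocycle
  have hfP : ∀ v δ, δ ∈ Gamma1 d → s(a v x, a (v + δ) x) ∉ P → f (v + δ) = f v :=
    fun v δ hδ h => sub_eq_zero.mp ((hf v δ hδ).symm.trans (Set.indicator_of_notMem h _))
  obtain ⟨u, rfl, hu, hu'⟩ := exists_act_eq_and_eq_of_boundary_edges ha0 haadd hfree hd hFfin
    hFconn hvis (fun v δ hδ h => hfP v δ hδ fun he => h ((mk_mem_bdSym_iff ha0 haadd).mp (hP he)))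
    hγ hx hy hγ' hx' hy'
  have hEP : s(a 0 x, a γ x) ∈ P := by
    rw [ha0, ← hE]
    exact ⟨E.2, SimpleGraph.Reachable.refl _⟩
  have hE'P : s(a u x, a (u + γ') x) ∈ P := by
    by_contra h
    have h₁ := hf 0 γ hγ
    rw [zero_add, ← hu', hfP u γ' hγ' h, hu, sub_self] at h₁
    simp only [b, Set.indicator_of_mem hEP, Pi.one_apply] at h₁
    exact one_ne_zero h₁
  obtain ⟨_, hreach⟩ := hE'P
  convert hreach
  rw [hE', add_comm, haadd]

theorem bdSym_finite {F : Set X} (hFfin : F.Finite) : (bdSym d a F).Finite := by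
  refine ((hFfin.prod (Gamma1 d).finite_toSet).image fun p => s(p.1, a p.2 p.1)).subset ?_
  rintro e ⟨x, y, rfl, ⟨γ, hγ, rfl⟩, hx, -⟩
  exact ⟨(x, γ), ⟨hx, hγ⟩, rfl⟩

include ha0 haadd hfree in
theorem bdSym_nonempty (hd : 0 < d) {F : Set X} (hFfin : F.Finite) (hFne : F.Nonempty) :
    (bdSym d a F).Nonempty := by
  obtain ⟨x, hx⟩ := hFne
  let i : Fin d := ⟨0, hd⟩
  have hT := hFfin.preimage (act_left_injective haadd hfree x).injOn
  obtain ⟨γ, hγ, hmax⟩ := hT.toFinset.exists_max_image (· i)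
    ⟨0, hT.mem_toFinset.mpr (by simpa [ha0] using hx)⟩
  rw [Set.Finite.mem_toFinset] at hγ
  refine ⟨_, a γ x, a (γ + Pi.single i 1) x, rfl, actAdj_act_add haadd γ (single_mem_Gamma1 i),
    hγ, fun h => ?_⟩
  have := hmax _ (hT.mem_toFinset.mpr h)
  simp at this

end FreeAction

/-- **Euler cycles on boundaries.** Let `d ≥ 2`, let `a : ℤᵈ ↷ X` be a free action with
associated graph `G_a`, and let `F ⊆ X` be a finite (nonempty) `G_a`-connected set with
`∂_vis(∞) F = ∂F`.  Then `H_{∂F}` has an Euler cycle: a closed walk traversing every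
edge exactly once. -/
theorem euler_cycle_on_boundary {X : Type*} (d : ℕ) (hd : 2 ≤ d)
    (a : (Fin d → ℤ) → X → X)
    (ha0 : ∀ x : X, a 0 x = x)
    (haadd : ∀ (g g' : Fin d → ℤ) (x : X), a (g + g') x = a g (a g' x))
    (hfree : ∀ (g : Fin d → ℤ) (x : X), a g x = x → g = 0)
    (F : Set X) (hFfin : F.Finite) (hFne : F.Nonempty)
    (hFconn : ConnWithin d a F)
    (hvis : ∀ x y : X, ActAdj d a x y → x ∈ F → y ∉ F →
      (compOutside d a F y).Infinite) :
    ∃ (v : {e : Sym2 X // e ∈ bdSym d a F}) (w : (HBoundary d a F).Walk v v),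
      w.IsEulerian := by
  have : Fintype {e : Sym2 X // e ∈ bdSym d a F} := (bdSym_finite hFfin).fintype
  have : Nonempty {e : Sym2 X // e ∈ bdSym d a F} :=
    (bdSym_nonempty ha0 haadd hfree (by omega) hFfin hFne).to_subtype
  exact SimpleGraph.exists_isEulerian_of_even_degree
    (hBoundary_preconnected ha0 haadd hfree hd hFfin hFconn hvis)
    (even_degree_hBoundary ha0 haadd hfree)
end

section
/- Let d ≥ 2 and let G be the graph on vertex set ℤ^d with an edge between x and y iff ‖x − y‖_∞ = 1. Then the 3-cycles of G generate the cycle space of G over the field with two elements: every cycle of G is the mod-2 edgewise sum of finitely many 3-cycles of G. -/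
/-!
Fix a base vertex `b` and the greedy spanning tree in which every vertex moves one unit towards
`b` in each coordinate. Over `𝔽₂` a closed walk is the sum of the fundamental cycles of its
edges, so it suffices that the fundamental cycle of every edge `ac` is a sum of triangles. The
greedy steps from `a` and `c` land on equal or adjacent vertices, so that cycle is a triangle or a
4-cycle plus the fundamental cycle of an edge closer to `b`. Every 4-cycle is a sum of triangles:
through a diagonal if one is an edge, and otherwise through the vertex with coordinates
`max - 1`, which is adjacent to all four corners.
-/

open Finset

open scoped Classical

/-- The graph on `ℤᵈ` with an edge between `x` and `y` iff `‖x − y‖_∞ = 1`, i.e. iff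
`x ≠ y` and `|x i − y i| ≤ 1` for all `i`. -/
def latticeGraph (d : ℕ) : SimpleGraph (Fin d → ℤ) :=
  SimpleGraph.fromRel (fun x y => ∀ i, |x i - y i| ≤ 1)

namespace SimpleGraph

variable {V : Type*} [DecidableEq V] {G : SimpleGraph V}

def Walk.edgeVec {u v : V} (p : G.Walk u v) : Sym2 V → ZMod 2 := fun e => p.edges.count e

@[simp]
theorem Walk.edgeVec_nil {u : V} : (Walk.nil : G.Walk u u).edgeVec = 0 := rfl

@[simp]
theorem Walk.edgeVec_cons {u v w : V} (h : G.Adj u v) (p : G.Walk v w) :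
    (Walk.cons h p).edgeVec = Pi.single s(u, v) 1 + p.edgeVec := by
  ext e
  simp only [edgeVec, edges_cons, List.count_cons, Pi.add_apply, Pi.single_apply, beq_iff_eq,
    eq_comm (a := e)]
  split_ifs <;> push_cast <;> ring

theorem Walk.IsTrail.edgeVec_apply {u v : V} {p : G.Walk u v} (hp : p.IsTrail)
    (e : Sym2 V) : p.edgeVec e = if e ∈ p.edges then 1 else 0 := by
  split_ifs with he
  · simp [edgeVec, List.count_eq_one_of_mem hp.edges_nodup he]
  · simp [edgeVec, List.count_eq_zero_of_not_mem he]

def triangleSpan (G : SimpleGraph V) : AddSubmonoid (Sym2 V → ZMod 2) :=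
  AddSubmonoid.closure
    {v | ∃ (y : V) (t : G.Walk y y), t.IsCycle ∧ t.length = 3 ∧ t.edgeVec = v}

theorem triangle_mem_triangleSpan {p q r : V} (hpq : G.Adj p q) (hqr : G.Adj q r)
    (hrp : G.Adj r p) :
    Pi.single s(p, q) 1 + Pi.single s(q, r) 1 + Pi.single s(r, p) 1 ∈ G.triangleSpan := by
  refine AddSubmonoid.subset_closure ⟨p, .cons hpq (.cons hqr (.cons hrp .nil)), ?_, rfl, ?_⟩
  · rw [Walk.isCycle_def]
    aesop
  · simp [add_assoc]

theorem fourCycle_mem_triangleSpan_of_adj {w x y z : V} (hwx : G.Adj w x) (hxy : G.Adj x y)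
    (hyz : G.Adj y z) (hzw : G.Adj z w) (hwy : G.Adj w y) :
    Pi.single s(w, x) 1 + Pi.single s(x, y) 1 + Pi.single s(y, z) 1 + Pi.single s(z, w) 1 ∈
      G.triangleSpan := by
  -- `grind` cancels `v + v` through `CharP (Sym2 V → ZMod 2) 2`, which needs a nonempty domain.
  have : Nonempty (Sym2 V) := ⟨s(w, w)⟩
  convert add_mem (triangle_mem_triangleSpan hwx hxy hwy.symm)
    (triangle_mem_triangleSpan hwy hyz hzw) using 1
  rw [Sym2.eq_swap (a := y)]
  grind

theorem fourCycle_mem_triangleSpan_of_forall_adj {w x y z p : V} (hwx : G.Adj w x)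
    (hxy : G.Adj x y) (hyz : G.Adj y z) (hzw : G.Adj z w) (hpw : G.Adj p w) (hpx : G.Adj p x)
    (hpy : G.Adj p y) (hpz : G.Adj p z) :
    Pi.single s(w, x) 1 + Pi.single s(x, y) 1 + Pi.single s(y, z) 1 + Pi.single s(z, w) 1 ∈
      G.triangleSpan := by
  have : Nonempty (Sym2 V) := ⟨s(w, w)⟩
  convert add_mem (add_mem (triangle_mem_triangleSpan hwx hpx.symm hpw)
    (triangle_mem_triangleSpan hxy hpy.symm hpx))
    (add_mem (triangle_mem_triangleSpan hyz hpz.symm hpy)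
    (triangle_mem_triangleSpan hzw hpw.symm hpz)) using 1
  rw [Sym2.eq_swap (a := x), Sym2.eq_swap (a := y), Sym2.eq_swap (a := z),
    Sym2.eq_swap (a := w)]
  grind

theorem Walk.edgeVec_add_add_mem_of_forall_adj {S : AddSubmonoid (Sym2 V → ZMod 2)}
    (φ : V → Sym2 V → ZMod 2)
    (hφ : ∀ a c, G.Adj a c → Pi.single s(a, c) 1 + φ a + φ c ∈ S)
    {u v : V} (p : G.Walk u v) : p.edgeVec + φ u + φ v ∈ S := by
  have : Nonempty (Sym2 V) := ⟨s(u, u)⟩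
  induction p with
  | nil =>
    convert zero_mem S using 1
    grind [Walk.edgeVec_nil]
  | @cons a c _ h p ih =>
    convert add_mem (hφ a c h) ih using 1
    rw [edgeVec_cons]
    grind

theorem Walk.edgeVec_mem_of_forall_adj {S : AddSubmonoid (Sym2 V → ZMod 2)}
    (φ : V → Sym2 V → ZMod 2)
    (hφ : ∀ a c, G.Adj a c → Pi.single s(a, c) 1 + φ a + φ c ∈ S)
    {u : V} (p : G.Walk u u) : p.edgeVec ∈ S := by
  have : Nonempty (Sym2 V) := ⟨s(u, u)⟩
  convert p.edgeVec_add_add_mem_of_forall_adj φ hφ using 1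
  grind

theorem Walk.IsCycle.exists_triangles_of_edgeVec_mem {x : V} {w : G.Walk x x}
    (hw : w.IsCycle) (hspan : w.edgeVec ∈ G.triangleSpan) :
    ∃ (m : ℕ) (T : Fin m → Finset (Sym2 V)),
      (∀ j : Fin m, ∃ (y : V) (t : G.Walk y y),
        t.IsCycle ∧ t.length = 3 ∧ T j = t.edges.toFinset) ∧
      (∀ e : Sym2 V,
        e ∈ w.edges ↔ Odd (Finset.univ.filter (fun j : Fin m => e ∈ T j)).card) := by
  obtain ⟨L, hL, hsum⟩ := AddSubmonoid.exists_list_of_mem_closure hspan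
  choose y t ht using fun j : Fin L.length => hL _ (L.get_mem j)
  refine ⟨L.length, fun j => (t j).edges.toFinset,
    fun j => ⟨y j, t j, (ht j).1, (ht j).2.1, rfl⟩, fun e => ?_⟩
  have hsum_e : w.edgeVec e = ∑ j, (t j).edgeVec e := by
    simp only [← hsum, (ht _).2.2, ← Finset.sum_apply, ← List.sum_ofFn, List.ofFn_get]
  rw [← ZMod.natCast_eq_one_iff_odd, ← Finset.sum_boole]
  simp only [List.mem_toFinset, ← (ht _).1.isTrail.edgeVec_apply, ← hsum_e]
  rw [hw.isTrail.edgeVec_apply]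
  split_ifs <;> simp [*]

end SimpleGraph

namespace latticeGraph

open SimpleGraph

variable {d : ℕ}

theorem adj_iff {x y : Fin d → ℤ} :
    (latticeGraph d).Adj x y ↔ x ≠ y ∧ ∀ i, |x i - y i| ≤ 1 := by
  simp only [latticeGraph, SimpleGraph.fromRel_adj, ne_eq, and_congr_right_iff]
  intro _
  refine ⟨fun h => h.elim id fun h i => ?_, Or.inl⟩
  rw [abs_sub_comm]
  exact h i

def stepToward (a b : Fin d → ℤ) : Fin d → ℤ := fun i => a i + Int.sign (b i - a i)

theorem sum_natAbs_stepToward_sub_lt {a b : Fin d → ℤ} (h : a ≠ b) :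
    ∑ i, (stepToward a b i - b i).natAbs < ∑ i, (a i - b i).natAbs := by
  obtain ⟨j, hj⟩ := Function.ne_iff.mp h
  refine Finset.sum_lt_sum (fun i _ => ?_) ⟨j, Finset.mem_univ j, ?_⟩ <;>
    simp only [stepToward] <;> grind

theorem adj_stepToward {a b : Fin d → ℤ} (h : a ≠ b) :
    (latticeGraph d).Adj a (stepToward a b) := by
  obtain ⟨j, hj⟩ := Function.ne_iff.mp h
  refine adj_iff.mpr ⟨fun he => hj ?_, fun i => ?_⟩
  · have := congrFun he j
    simp only [stepToward] at this
    grind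
  · simp only [stepToward]
    grind

theorem stepToward_eq_of_adj {a b : Fin d → ℤ} (h : (latticeGraph d).Adj a b) :
    stepToward a b = b := by
  funext i
  have := (adj_iff.mp h).2 i
  simp only [stepToward]
  grind

theorem stepToward_eq_or_adj {a c : Fin d → ℤ} (b : Fin d → ℤ)
    (h : (latticeGraph d).Adj a c) :
    stepToward a b = stepToward c b ∨ (latticeGraph d).Adj (stepToward a b) (stepToward c b) := by
  by_cases he : stepToward a b = stepToward c b
  · exact .inl he
  · refine .inr (adj_iff.mpr ⟨he, fun i => ?_⟩)
    have := (adj_iff.mp h).2 i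
    simp only [stepToward]
    grind

theorem exists_adj_of_fourCycle {w x y z : Fin d → ℤ} (hwx : (latticeGraph d).Adj w x)
    (hxy : (latticeGraph d).Adj x y) (hyz : (latticeGraph d).Adj y z)
    (hzw : (latticeGraph d).Adj z w) (hwy : ¬∀ i, |w i - y i| ≤ 1)
    (hxz : ¬∀ i, |x i - z i| ≤ 1) :
    ∃ p, (latticeGraph d).Adj p w ∧ (latticeGraph d).Adj p x ∧ (latticeGraph d).Adj p y ∧
      (latticeGraph d).Adj p z := by
  set p : Fin d → ℤ := fun i => max (max (w i) (x i)) (max (y i) (z i)) - 1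
  have hp : ∀ i,
      |p i - w i| ≤ 1 ∧ |p i - x i| ≤ 1 ∧ |p i - y i| ≤ 1 ∧ |p i - z i| ≤ 1 := by
    intro i
    have := (adj_iff.mp hwx).2 i
    have := (adj_iff.mp hxy).2 i
    have := (adj_iff.mp hyz).2 i
    have := (adj_iff.mp hzw).2 i
    simp only [p, abs_le] at *
    omega
  refine ⟨p, adj_iff.mpr ⟨?_, fun i => (hp i).1⟩, adj_iff.mpr ⟨?_, fun i => (hp i).2.1⟩,
    adj_iff.mpr ⟨?_, fun i => (hp i).2.2.1⟩, adj_iff.mpr ⟨?_, fun i => (hp i).2.2.2⟩⟩ <;>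
    intro he
  · exact hwy fun i => he ▸ (hp i).2.2.1
  · exact hxz fun i => he ▸ (hp i).2.2.2
  · exact hwy fun i => he ▸ abs_sub_comm (w i) (p i) ▸ (hp i).1
  · exact hxz fun i => he ▸ abs_sub_comm (x i) (p i) ▸ (hp i).2.1

theorem fourCycle_mem_triangleSpan {w x y z : Fin d → ℤ} (hwx : (latticeGraph d).Adj w x)
    (hxy : (latticeGraph d).Adj x y) (hyz : (latticeGraph d).Adj y z)
    (hzw : (latticeGraph d).Adj z w) :
    Pi.single s(w, x) 1 + Pi.single s(x, y) 1 + Pi.single s(y, z) 1 + Pi.single s(z, w) 1 ∈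
      (latticeGraph d).triangleSpan := by
  by_cases hwy : w = y
  · subst hwy
    convert (latticeGraph d).triangleSpan.zero_mem using 1
    rw [Sym2.eq_swap (a := x), Sym2.eq_swap (a := z)]
    grind
  by_cases hxz : x = z
  · subst hxz
    convert (latticeGraph d).triangleSpan.zero_mem using 1
    rw [Sym2.eq_swap (a := y), Sym2.eq_swap (a := x)]
    grind
  by_cases hwy' : (latticeGraph d).Adj w y
  · exact fourCycle_mem_triangleSpan_of_adj hwx hxy hyz hzw hwy'
  by_cases hxz' : (latticeGraph d).Adj x z
  · have h := fourCycle_mem_triangleSpan_of_adj hxy hyz hzw hwx hxz'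
    rwa [add_comm, ← add_assoc, ← add_assoc] at h
  obtain ⟨p, hpw, hpx, hpy, hpz⟩ := exists_adj_of_fourCycle hwx hxy hyz hzw
    (fun h => hwy' (adj_iff.mpr ⟨hwy, h⟩)) (fun h => hxz' (adj_iff.mpr ⟨hxz, h⟩))
  exact fourCycle_mem_triangleSpan_of_forall_adj hwx hxy hyz hzw hpw hpx hpy hpz

def greedyPathVec (b a : Fin d → ℤ) : Sym2 (Fin d → ℤ) → ZMod 2 :=
  if h : a = b then 0 else Pi.single s(a, stepToward a b) 1 + greedyPathVec b (stepToward a b)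
termination_by ∑ i, (a i - b i).natAbs
decreasing_by exact sum_natAbs_stepToward_sub_lt h

@[simp]
theorem greedyPathVec_self (b : Fin d → ℤ) : greedyPathVec b b = 0 := by
  rw [greedyPathVec]
  simp

theorem greedyPathVec_of_ne {a b : Fin d → ℤ} (h : a ≠ b) :
    greedyPathVec b a =
      Pi.single s(a, stepToward a b) 1 + greedyPathVec b (stepToward a b) := by
  rw [greedyPathVec]
  simp [h]

theorem greedyPathVec_of_adj {a b : Fin d → ℤ} (h : (latticeGraph d).Adj a b) :
    greedyPathVec b a = Pi.single s(a, b) 1 := by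
  rw [greedyPathVec_of_ne h.ne, stepToward_eq_of_adj h, greedyPathVec_self, add_zero]

theorem single_add_greedyPathVec_add_greedyPathVec_mem (b : Fin d → ℤ) {a c : Fin d → ℤ}
    (hac : (latticeGraph d).Adj a c) :
    Pi.single s(a, c) 1 + greedyPathVec b a + greedyPathVec b c ∈
      (latticeGraph d).triangleSpan := by
  by_cases hab : a = b
  · subst hab
    convert (latticeGraph d).triangleSpan.zero_mem using 1
    rw [greedyPathVec_self, greedyPathVec_of_adj hac.symm, Sym2.eq_swap]
    grind
  by_cases hcb : c = b
  · subst hcb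
    convert (latticeGraph d).triangleSpan.zero_mem using 1
    rw [greedyPathVec_self, greedyPathVec_of_adj hac]
    grind
  rw [greedyPathVec_of_ne hab, greedyPathVec_of_ne hcb]
  have haa' := adj_stepToward hab
  have hcc' := adj_stepToward hcb
  rcases stepToward_eq_or_adj b hac with he | ha'c'
  · rw [← he] at hcc' ⊢
    convert triangle_mem_triangleSpan hac hcc' haa'.symm using 1
    rw [Sym2.eq_swap (a := stepToward a b)]
    grind
  · convert add_mem (fourCycle_mem_triangleSpan hac hcc' ha'c'.symm haa'.symm)
      (single_add_greedyPathVec_add_greedyPathVec_mem b ha'c') using 1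
    rw [Sym2.eq_swap (a := stepToward c b), Sym2.eq_swap (a := stepToward a b) (b := a)]
    grind
termination_by ∑ i, (a i - b i).natAbs
decreasing_by exact sum_natAbs_stepToward_sub_lt hab

theorem edgeVec_mem_triangleSpan {u : Fin d → ℤ} (p : (latticeGraph d).Walk u u) :
    p.edgeVec ∈ (latticeGraph d).triangleSpan :=
  p.edgeVec_mem_of_forall_adj (greedyPathVec 0) fun _ _ =>
    single_add_greedyPathVec_add_greedyPathVec_mem 0

end latticeGraph

theorem lattice_triangles_generate_cycle_space_general (d : ℕ)
    (x : Fin d → ℤ) (w : (latticeGraph d).Walk x x) (hw : w.IsCycle) :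
    ∃ (m : ℕ) (T : Fin m → Finset (Sym2 (Fin d → ℤ))),
      (∀ j : Fin m, ∃ (y : Fin d → ℤ) (t : (latticeGraph d).Walk y y),
        t.IsCycle ∧ t.length = 3 ∧ T j = t.edges.toFinset) ∧
      (∀ e : Sym2 (Fin d → ℤ),
        e ∈ w.edges ↔ Odd (Finset.univ.filter (fun j : Fin m => e ∈ T j)).card) :=
  hw.exists_triangles_of_edgeVec_mem (latticeGraph.edgeVec_mem_triangleSpan w)

/-- **Triangles generate the cycle space of the `ℤᵈ` sup-norm graph.** For `d ≥ 2`, every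
cycle of the graph on `ℤᵈ` (edges given by `‖x − y‖_∞ = 1`) is the mod-2 edgewise sum of
finitely many 3-cycles: there are finitely many 3-cycle edge sets such that an edge lies
on the given cycle iff it lies in an odd number of them. -/
theorem lattice_triangles_generate_cycle_space (d : ℕ) (hd : 2 ≤ d)
    (x : Fin d → ℤ) (w : (latticeGraph d).Walk x x) (hw : w.IsCycle) :
    ∃ (m : ℕ) (T : Fin m → Finset (Sym2 (Fin d → ℤ))),
      (∀ j : Fin m, ∃ (y : Fin d → ℤ) (t : (latticeGraph d).Walk y y),
        t.IsCycle ∧ t.length = 3 ∧ T j = t.edges.toFinset) ∧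
      (∀ e : Sym2 (Fin d → ℤ),
        e ∈ w.edges ↔ Odd (Finset.univ.filter (fun j : Fin m => e ∈ T j)).card) :=
  lattice_triangles_generate_cycle_space_general d x w hw
end

section
/- Let u ∈ (𝕋^k)^d be such that the action a_u of ℤ^d on 𝕋^k is free, and let G_{a_u} be the associated graph. Then for every r > 0 there is a Borel maximal r-discrete subset of 𝕋^k for G_{a_u}. -/
open Finset

/-- The `k`-dimensional torus `𝕋ᵏ = ℝᵏ/ℤᵏ`. -/
abbrev Torus (k : ℕ) := Fin k → AddCircle (1 : ℝ)

/-- The action `a_u` of `ℤᵈ` on `𝕋ᵏ`: `(n_1, …, n_d) · x = n_1 u_1 + ⋯ + n_d u_d + x`. -/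
noncomputable def torusAct {k d : ℕ} (u : Fin d → Torus k) (g : Fin d → ℤ) (x : Torus k) : Torus k :=
  (∑ i, g i • u i) + x

/-- The graph `G_{a_u}` on `𝕋ᵏ`: `x` and `y` are adjacent iff `γ ·_{a_u} x = y` for some
`γ` with `‖γ‖_∞ = 1`. -/
def torusGraph {k d : ℕ} (u : Fin d → Torus k) : SimpleGraph (Torus k) :=
  SimpleGraph.fromRel (fun x y => ∃ γ ∈ Gamma1 d, torusAct u γ x = y)

/-!
The graph `G_{a_u}` is invariant under translations of `𝕋ᵏ`, so `d_G(x, y) ≤ r` iff `y - x`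
lies in `F = {v | d_G(0, v) ≤ r}`; this `F` is symmetric, contains `0`, and is finite because
a walk of length `n` from `x` ends at `∑ gᵢ uᵢ + x` with `‖g‖_∞ ≤ n`. It therefore suffices to
find a Borel set `Y ⊆ 𝕋ᵏ` with `x - y ∉ F` for distinct `x, y ∈ Y` and `Y + F = 𝕋ᵏ`.
Cover `𝕋ᵏ` by countably many balls `Bₙ` of radius less than half the least norm of a nonzero
element of `F`, so that no two distinct points of one ball differ by an element of `F`. Running
through the balls in turn and adding at once every point of `Bₙ` that is not `F`-close to a point
chosen before gives such a `Y`, Borel because each stage is built from finitely many translates.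
-/

section Greedy

variable {α : Type*} [AddCommGroup α] (P : ℕ → Set α) (F : Set α)

def greedyNet : ℕ → Set α
  | 0 => ∅
  | n + 1 => greedyNet n ∪ {x ∈ P n | ∀ f ∈ F, x - f ∉ greedyNet n}

theorem greedyNet_mono : Monotone (greedyNet P F) :=
  monotone_nat_of_le_succ fun _ => Set.subset_union_left

variable {P F}

theorem measurableSet_greedyNet [MeasurableSpace α] [MeasurableSub α]
    (hP : ∀ n, MeasurableSet (P n)) (hF : F.Countable) (n : ℕ) :
    MeasurableSet (greedyNet P F n) := by
  induction n with
  | zero => exact MeasurableSet.empty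
  | succ n ih =>
    have hfresh : MeasurableSet {x | ∀ f ∈ F, x - f ∉ greedyNet P F n} := by
      simp only [Set.ofPred_forall]
      exact .biInter hF fun f _ => measurable_sub_const f ih.compl
    exact ih.union ((hP n).inter hfresh)

theorem greedyNet_pairwise (hneg : ∀ f ∈ F, -f ∈ F)
    (hP : ∀ n, (P n).Pairwise fun x y => x - y ∉ F) (n : ℕ) :
    (greedyNet P F n).Pairwise fun x y => x - y ∉ F := by
  induction n with
  | zero => exact Set.pairwise_empty _
  | succ n ih =>
    refine Set.pairwise_union.mpr ⟨ih, (hP n).mono (Set.sep_subset _ _), ?_⟩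
    rintro x hx y ⟨-, hy⟩ -
    have hx' : y - (y - x) ∈ greedyNet P F n := by rwa [sub_sub_cancel]
    exact ⟨fun hxy => hy (y - x) (by simpa using hneg _ hxy) hx', fun hyx => hy (y - x) hyx hx'⟩

theorem exists_mem_greedyNet_sub_mem (h0 : 0 ∈ F) {n : ℕ} {x : α} (hx : x ∈ P n) :
    ∃ y ∈ greedyNet P F (n + 1), x - y ∈ F := by
  by_cases hfresh : ∀ f ∈ F, x - f ∉ greedyNet P F n
  · exact ⟨x, Or.inr ⟨hx, hfresh⟩, by rwa [sub_self]⟩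
  · push Not at hfresh
    obtain ⟨f, hf, hxf⟩ := hfresh
    exact ⟨x - f, Or.inl hxf, by rwa [sub_sub_cancel]⟩

theorem exists_measurableSet_maximal_of_cover [MeasurableSpace α] [MeasurableSub α]
    (hF : F.Countable) (h0 : 0 ∈ F) (hneg : ∀ f ∈ F, -f ∈ F)
    (hPm : ∀ n, MeasurableSet (P n)) (hP : ∀ n, (P n).Pairwise fun x y => x - y ∉ F)
    (hcover : ∀ x, ∃ n, x ∈ P n) :
    ∃ Y : Set α, MeasurableSet Y ∧ (Y.Pairwise fun x y => x - y ∉ F) ∧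
      ∀ x, ∃ y ∈ Y, x - y ∈ F := by
  refine ⟨⋃ n, greedyNet P F n, .iUnion (measurableSet_greedyNet hPm hF),
    (Set.pairwise_iUnion (greedyNet_mono P F).directed_le).mpr (greedyNet_pairwise hneg hP),
    fun x => ?_⟩
  obtain ⟨n, hx⟩ := hcover x
  obtain ⟨y, hy, hxy⟩ := exists_mem_greedyNet_sub_mem h0 hx
  exact ⟨y, Set.mem_iUnion_of_mem _ hy, hxy⟩

end Greedy

theorem exists_measurableSet_maximal_sub_discrete {α : Type*} [NormedAddCommGroup α]
    [TopologicalSpace.SeparableSpace α] [MeasurableSpace α] [BorelSpace α]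
    {F : Set α} (hF : F.Finite) (h0 : 0 ∈ F) (hneg : ∀ f ∈ F, -f ∈ F) :
    ∃ Y : Set α, MeasurableSet Y ∧ (Y.Pairwise fun x y => x - y ∉ F) ∧
      ∀ x, ∃ y ∈ Y, x - y ∈ F := by
  obtain ⟨ε, hε, hball⟩ : ∃ ε > 0, Metric.ball 0 ε ⊆ (F \ {0})ᶜ :=
    Metric.isOpen_iff.mp (hF.subset Set.sdiff_subset).isClosed.isOpen_compl 0 (by simp)
  obtain ⟨c, hc⟩ := TopologicalSpace.exists_dense_seq α
  refine exists_measurableSet_maximal_of_cover (P := fun n => Metric.ball (c n) (ε / 2))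
    hF.countable h0 hneg (fun n => measurableSet_ball) (fun n x hx y hy hxy hF => ?_)
    fun x => hc.exists_dist_lt x (half_pos hε)
  have hsmall : x - y ∈ Metric.ball 0 ε := by
    rw [mem_ball_zero_iff, ← dist_eq_norm]
    linarith [dist_triangle_right x y (c n), Metric.mem_ball.mp hx, Metric.mem_ball.mp hy]
  exact hball hsmall ⟨hF, sub_ne_zero.mpr hxy⟩

namespace SimpleGraph

variable {V W : Type*} {G : SimpleGraph V} {G' : SimpleGraph W}

theorem Hom.edist_le (f : G →g G') (u v : V) : G'.edist (f u) (f v) ≤ G.edist u v :=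
  le_iInf fun p => (p.map f).edist_le.trans_eq (by simp)

theorem Iso.edist_eq (f : G ≃g G') (u v : V) : G'.edist (f u) (f v) = G.edist u v :=
  le_antisymm (f.toHom.edist_le u v) (by simpa using f.symm.toHom.edist_le (f u) (f v))

end SimpleGraph

theorem coe_Gamma1_subset_Icc {d : ℕ} : ↑(Gamma1 d) ⊆ Set.Icc (-1 : Fin d → ℤ) 1 := by
  intro γ hγ
  have hγ' := Fintype.mem_piFinset.mp (Finset.mem_of_mem_erase hγ)
  refine ⟨fun i => ?_, fun i => ?_⟩ <;> have := hγ' i <;> simp at this ⊢ <;> omega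

section TorusGraph

variable {k d : ℕ} (u : Fin d → Torus k)

theorem torusGraph_adj_add_right (x y z : Torus k) :
    (torusGraph u).Adj (x + z) (y + z) ↔ (torusGraph u).Adj x y := by
  simp only [torusGraph, SimpleGraph.fromRel_adj, torusAct, ← add_assoc, add_left_inj, ne_eq]

def torusGraph.addRight (z : Torus k) : torusGraph u ≃g torusGraph u :=
  ⟨Equiv.addRight z, torusGraph_adj_add_right u _ _ z⟩

@[simp]
theorem torusGraph.addRight_apply (z x : Torus k) : torusGraph.addRight u z x = x + z :=
  rfl

theorem torusGraph_edist_eq_edist_zero_sub (x y : Torus k) :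
    (torusGraph u).edist x y = (torusGraph u).edist 0 (y - x) := by
  simpa using (torusGraph.addRight u x).edist_eq 0 (y - x)

theorem torusGraph_edist_zero_neg (v : Torus k) :
    (torusGraph u).edist 0 (-v) = (torusGraph u).edist 0 v := by
  rw [← zero_sub, ← torusGraph_edist_eq_edist_zero_sub, SimpleGraph.edist_comm]

theorem exists_eq_linearCombination_add_of_adj {x y : Torus k} (h : (torusGraph u).Adj x y) :
    ∃ γ ∈ Set.Icc (-1 : Fin d → ℤ) 1, y = Fintype.linearCombination ℤ u γ + x := by
  obtain ⟨-, ⟨γ, hγ, rfl⟩ | ⟨γ, hγ, rfl⟩⟩ := h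
  · exact ⟨γ, coe_Gamma1_subset_Icc hγ, rfl⟩
  · obtain ⟨hγl, hγu⟩ := coe_Gamma1_subset_Icc hγ
    refine ⟨-γ, ⟨neg_le_neg hγu, neg_le.mp hγl⟩, ?_⟩
    rw [map_neg, torusAct, Fintype.linearCombination_apply, neg_add_cancel_left]

theorem exists_eq_linearCombination_add_of_walk {x y : Torus k} (p : (torusGraph u).Walk x y) :
    ∃ g ∈ Set.Icc (-(p.length : Fin d → ℤ)) p.length,
      y = Fintype.linearCombination ℤ u g + x := by
  induction p with
  | nil => exact ⟨0, by simp, by simp⟩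
  | cons h p ih =>
    obtain ⟨γ, ⟨hγl, hγu⟩, rfl⟩ := exists_eq_linearCombination_add_of_adj u h
    obtain ⟨g, ⟨hgl, hgu⟩, rfl⟩ := ih
    refine ⟨g + γ, ⟨?_, ?_⟩, by rw [map_add, add_assoc]⟩
    · rw [SimpleGraph.Walk.length_cons, Nat.cast_succ, neg_add]
      exact add_le_add hgl hγl
    · rw [SimpleGraph.Walk.length_cons, Nat.cast_succ]
      exact add_le_add hgu hγu

theorem finite_setOf_edist_zero_le (r : ℕ) : {v | (torusGraph u).edist 0 v ≤ r}.Finite := by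
  refine ((Set.finite_Icc (-(r : Fin d → ℤ)) r).image (Fintype.linearCombination ℤ u)).subset ?_
  intro v (hv : (torusGraph u).edist 0 v ≤ r)
  obtain ⟨p, hp⟩ := SimpleGraph.exists_walk_of_edist_ne_top (ne_top_of_le_ne_top (by simp) hv)
  have hlen : (p.length : Fin d → ℤ) ≤ r := Nat.mono_cast (by exact_mod_cast hp ▸ hv)
  obtain ⟨g, hg, hpv⟩ := exists_eq_linearCombination_add_of_walk u p
  exact ⟨g, Set.Icc_subset_Icc (neg_le_neg hlen) hlen hg, by simpa using hpv.symm⟩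

end TorusGraph

theorem borel_maximal_discrete_set_general (k d : ℕ) (u : Fin d → Torus k) (r : ℕ) :
    ∃ Y : Set (Torus k), MeasurableSet Y ∧
      (∀ x ∈ Y, ∀ y ∈ Y, x ≠ y → (r : ℕ∞) < (torusGraph u).edist x y) ∧
      (∀ x : Torus k, ∃ y ∈ Y, (torusGraph u).edist x y ≤ (r : ℕ∞)) := by
  set F := {v | (torusGraph u).edist 0 v ≤ r}
  have hF : ∀ x y, x - y ∈ F ↔ (torusGraph u).edist x y ≤ r := fun x y => by
    rw [SimpleGraph.edist_comm (u := x), torusGraph_edist_eq_edist_zero_sub u y x]; rfl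
  obtain ⟨Y, hYm, hsep, hcov⟩ := exists_measurableSet_maximal_sub_discrete
    (finite_setOf_edist_zero_le u r) (by simp)
    fun v hv => (torusGraph_edist_zero_neg u v).trans_le hv
  refine ⟨Y, hYm, fun x hx y hy hxy => not_le.mp ((hF x y).not.mp (hsep hx hy hxy)),
    fun x => ?_⟩
  obtain ⟨y, hy, hxy⟩ := hcov x
  exact ⟨y, hy, (hF x y).mp hxy⟩

/-- **Borel maximal discrete sets for `G_{a_u}`.** If `u ∈ (𝕋ᵏ)ᵈ` induces a free action
`a_u` of `ℤᵈ` on `𝕋ᵏ`, then for every `r > 0` there is a Borel maximal `r`-discrete set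
for the graph `G_{a_u}`: a Borel set `Y` with `d_G(x,y) > r` for distinct `x, y ∈ Y`,
such that every point is within graph distance `r` of a point of `Y`. -/
theorem borel_maximal_discrete_set (k d : ℕ) (u : Fin d → Torus k)
    (hfree : ∀ (g : Fin d → ℤ) (x : Torus k), torusAct u g x = x → g = 0)
    (r : ℕ) (hr : 0 < r) :
    ∃ Y : Set (Torus k), MeasurableSet Y ∧
      (∀ x ∈ Y, ∀ y ∈ Y, x ≠ y → (r : ℕ∞) < (torusGraph u).edist x y) ∧
      (∀ x : Torus k, ∃ y ∈ Y, (torusGraph u).edist x y ≤ (r : ℕ∞)) :=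
  borel_maximal_discrete_set_general k d u r
end
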